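/- arXiv:2411.04209 — 3 statements merged into one kernel-verified Lean document; each statement's English description precedes it below -/
import Mathlib

section
/- If x, y, z are integers with x, y, z ≥ 2 and C(x,y,z) ≤ 4, then for the mutated triple (x, y, xy − z) (the effect of mutating the cyclic rank 3 quiver at a vertex) the minimum entry is still ≥ 2; in particular xy − z ≥ 2. -/
/-- The Markov constant of a cyclic rank 3 quiver with multiplicities `x, y, z`. -/
def markovC (x y z : ℤ) : ℤ := x ^ 2 + y ^ 2 + z ^ 2 - x * y * z

theorem mutation_preserves_ge_two (x y z : ℤ) (hx : 2 ≤ x) (hy : 2 ≤ y) (hz : 2 ≤ z)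
    (hC : markovC x y z ≤ 4) :
    2 ≤ min (min x y) (x * y - z) ∧ 2 ≤ x * y - z := by
  unfold markovC at hC
  have key : 2 ≤ x * y - z := by
    by_contra h
    push_neg at h
    have h1 : x * y - 1 ≤ z := by omega
    rcases le_or_gt (x * y) z with h2 | h2
    · nlinarith [sq_nonneg x, sq_nonneg y]
    · have : z = x * y - 1 := by omega
      subst this
      nlinarith [sq_nonneg (x - y)]
  exact ⟨le_min (le_min hx hy) key, key⟩
end

section
/- The dreaded torus quiver is mutation-periodic: mutating the dreaded torus quiver at any of its 4 vertices yields a quiver isomorphic to the dreaded torus quiver. -/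
/-- Quiver mutation at vertex `k` on a skew-symmetric integer matrix. -/
def mutate {n : ℕ} (B : Matrix (Fin n) (Fin n) ℤ) (k : Fin n) : Matrix (Fin n) (Fin n) ℤ :=
  fun i j => if i = k ∨ j = k then -B i j
    else B i j + (|B i k| * B k j + B i k * |B k j|) / 2

/-- The quiver of `B` (edge `i → j` iff `B i j > 0`) has a directed cycle. -/
def HasCycle {n : ℕ} (B : Matrix (Fin n) (Fin n) ℤ) : Prop :=
  ∃ (ℓ : ℕ) (p : ℕ → Fin n), 0 < ℓ ∧ p ℓ = p 0 ∧ ∀ i < ℓ, 0 < B (p i) (p (i + 1))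

/-- The quiver of `B` is acyclic. -/
def Acyclic {n : ℕ} (B : Matrix (Fin n) (Fin n) ℤ) : Prop := ¬ HasCycle B

/-- `B'` is obtained from `B` by a finite sequence of mutations. -/
def MutEquiv {n : ℕ} (B B' : Matrix (Fin n) (Fin n) ℤ) : Prop :=
  ∃ L : List (Fin n), B' = L.foldl mutate B

/-- The dreaded torus quiver. -/
def dreadedTorus : Matrix (Fin 4) (Fin 4) ℤ :=
  !![0, 1, 1, -1; -1, 0, -1, 2; -1, 1, 0, -1; 1, -2, 1, 0]

/-!
Mutation is an involution and commutes with relabelling of the vertices. Hence if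
`μ_k B = B ∘ σ` (relabelling by `σ`), then `B = μ_k (B ∘ σ) = (μ_{σ k} B) ∘ σ`, so
`μ_{σ k} B = B ∘ σ⁻¹`. For the dreaded torus, mutation at vertex `0` is a relabelling by a
`4`-cycle sending `0` to `2`, and mutation at `1` is a relabelling by the transposition `(1 3)`;
the other two vertices follow.
-/

theorem two_dvd_abs_mul_add_mul_abs (a b : ℤ) : 2 ∣ |a| * b + a * |b| := by
  rw [← even_iff_two_dvd, Int.even_add, Int.even_mul, Int.even_mul, even_abs, even_abs]

section Mutation

variable {n : ℕ} (B : Matrix (Fin n) (Fin n) ℤ)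

theorem mutate_apply_of_ne {i j k : Fin n} (hi : i ≠ k) (hj : j ≠ k) :
    mutate B k i j = B i j + (|B i k| * B k j + B i k * |B k j|) / 2 :=
  if_neg (by tauto)

theorem mutate_apply_self_left {j k : Fin n} : mutate B k k j = -B k j :=
  if_pos (Or.inl rfl)

theorem mutate_apply_self_right {i k : Fin n} : mutate B k i k = -B i k :=
  if_pos (Or.inr rfl)

theorem mutate_mutate (k : Fin n) : mutate (mutate B k) k = B := by
  ext i j
  by_cases hi : i = k
  · subst hi; rw [mutate_apply_self_left, mutate_apply_self_left, neg_neg]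
  by_cases hj : j = k
  · subst hj; rw [mutate_apply_self_right, mutate_apply_self_right, neg_neg]
  rw [mutate_apply_of_ne _ hi hj, mutate_apply_of_ne _ hi hj, mutate_apply_self_right,
    mutate_apply_self_left, abs_neg, abs_neg, neg_mul, mul_neg, ← neg_add,
    Int.neg_ediv_of_dvd (two_dvd_abs_mul_add_mul_abs _ _)]
  ring

theorem mutate_submatrix {σ : Fin n → Fin n} (hσ : Function.Injective σ) (k : Fin n) :
    mutate (B.submatrix σ σ) k = (mutate B (σ k)).submatrix σ σ := by
  ext i j
  simp [mutate, hσ.eq_iff]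

end Mutation

theorem mutate_apply_eq_submatrix_symm {n : ℕ} {B : Matrix (Fin n) (Fin n) ℤ} {k : Fin n}
    {σ : Equiv.Perm (Fin n)} (h : mutate B k = B.submatrix σ σ) :
    mutate B (σ k) = B.submatrix σ.symm σ.symm := by
  have hB : B = (mutate B (σ k)).submatrix σ σ := by
    rw [← mutate_submatrix B σ.injective, ← h, mutate_mutate]
  simpa [Matrix.submatrix_submatrix] using (congrArg (·.submatrix σ.symm σ.symm) hB).symm

def dreadedTorusRotation : Equiv.Perm (Fin 4) :=
  ⟨![2, 0, 3, 1], ![1, 3, 0, 2], by decide, by decide⟩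

theorem mutate_dreadedTorus_zero :
    mutate dreadedTorus 0 = dreadedTorus.submatrix dreadedTorusRotation dreadedTorusRotation := by
  decide

theorem mutate_dreadedTorus_one :
    mutate dreadedTorus 1 = dreadedTorus.submatrix (Equiv.swap 1 3) (Equiv.swap 1 3) := by
  decide

theorem dreadedTorus_mutation_periodic (k : Fin 4) :
    ∃ σ : Equiv.Perm (Fin 4), ∀ i j, mutate dreadedTorus k i j = dreadedTorus (σ i) (σ j) := by
  suffices ∃ σ : Equiv.Perm (Fin 4), mutate dreadedTorus k = dreadedTorus.submatrix σ σ by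
    obtain ⟨σ, h⟩ := this
    exact ⟨σ, fun i j => congrFun₂ h i j⟩
  fin_cases k
  · exact ⟨_, mutate_dreadedTorus_zero⟩
  · exact ⟨_, mutate_dreadedTorus_one⟩
  · exact ⟨_, mutate_apply_eq_submatrix_symm mutate_dreadedTorus_zero⟩
  · exact ⟨_, mutate_apply_eq_submatrix_symm mutate_dreadedTorus_one⟩
end

section
/- The Markov quiver is non-mutation-acyclic: no finite sequence of mutations applied to the skew-symmetric matrix with above-diagonal entries (2, −2, 2) (i.e., B_{12}=2, B_{23}=2, B_{31}=2) produces a matrix whose quiver is acyclic. -/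
/-- The Markov quiver. -/
def markovQuiver : Matrix (Fin 3) (Fin 3) ℤ :=
  !![0, 2, -2; -2, 0, 2; 2, -2, 0]

lemma mutate_markov (k : Fin 3) : mutate markovQuiver k = -markovQuiver := by
  funext i j
  fin_cases k <;> fin_cases i <;> fin_cases j <;>
    simp [mutate, markovQuiver] <;> decide

lemma mutate_neg_markov (k : Fin 3) : mutate (-markovQuiver) k = markovQuiver := by
  funext i j
  fin_cases k <;> fin_cases i <;> fin_cases j <;>
    simp [mutate, markovQuiver] <;> decide

lemma foldl_both (L : List (Fin 3)) :
    (L.foldl mutate markovQuiver = markovQuiver ∨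
     L.foldl mutate markovQuiver = -markovQuiver) ∧
    (L.foldl mutate (-markovQuiver) = markovQuiver ∨
     L.foldl mutate (-markovQuiver) = -markovQuiver) := by
  induction L with
  | nil => exact ⟨Or.inl rfl, Or.inr rfl⟩
  | cons k t ih =>
      refine ⟨?_, ?_⟩
      · rw [List.foldl_cons, mutate_markov]; exact ih.2
      · rw [List.foldl_cons, mutate_neg_markov]; exact ih.1

lemma foldl_markov (L : List (Fin 3)) :
    L.foldl mutate markovQuiver = markovQuiver ∨
    L.foldl mutate markovQuiver = -markovQuiver := (foldl_both L).1

theorem markov_non_mutation_acyclic :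
    ∀ L : List (Fin 3), ¬ Acyclic (L.foldl mutate markovQuiver) := by
  intro L hac
  rcases foldl_markov L with h | h <;> rw [h] at hac <;> apply hac
  · exact ⟨3, fun i => ⟨i % 3, Nat.mod_lt _ (by norm_num)⟩, by norm_num, by decide,
      by intro i hi; interval_cases i <;> decide⟩
  · exact ⟨3, fun i => ⟨(2 * i) % 3, Nat.mod_lt _ (by norm_num)⟩, by norm_num, by decide,
      by intro i hi; interval_cases i <;> decide⟩
end
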